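/- Let W* ∈ ℝ^{d₁×d₂} have reduced singular value decomposition W* = U* Σ* V*ᵀ with U* ∈ ℝ^{d₁×k}, V* ∈ ℝ^{d₂×k} having orthonormal columns and Σ* = diag(σ₁,…,σ_k), σ₁ ≥ … ≥ σ_k > 0. Let U ∈ ℝ^{d₁×k} have orthonormal columns, let F ∈ ℝ^{d₂×k}, and set V̂ = W*ᵀU − F. Suppose V̂ = V R where V ∈ ℝ^{d₂×k} has orthonormal columns and R ∈ ℝ^{k×k}. Then the smallest singular value of R satisfies σ_min(R) ≥ σ_k √(1 − dist(U*, U)²) − ‖F‖₂. In particular, if σ_k √(1 − dist(U*, U)²) > ‖F‖₂ then R is invertible and ‖R⁻¹‖₂ ≤ 1/(σ_k √(1 − dist(U*, U)²) − ‖F‖₂). -/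

import Mathlib

open Matrix
open scoped Matrix.Norms.L2Operator



private lemma dot_self_nonneg {n : ℕ} (z : Fin n → ℝ) : 0 ≤ z ⬝ᵥ z :=
  Finset.sum_nonneg fun _ _ => mul_self_nonneg _

private lemma euc_norm_eq {n : ℕ} (z : Fin n → ℝ) :
    ‖(WithLp.equiv 2 (Fin n → ℝ)).symm z‖ = Real.sqrt (z ⬝ᵥ z) := by
  rw [EuclideanSpace.norm_eq]
  congr 1
  simp [dotProduct, Real.norm_eq_abs, sq_abs, sq]

private lemma dot_self_mulVec {m n : ℕ} (B : Matrix (Fin m) (Fin n) ℝ) (y : Fin n → ℝ) :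
    (B *ᵥ y) ⬝ᵥ (B *ᵥ y) = y ⬝ᵥ ((Bᵀ * B) *ᵥ y) := by
  rw [← mulVec_mulVec, dotProduct_mulVec y Bᵀ (B *ᵥ y), vecMul_transpose]

private lemma dot_ortho {m n : ℕ} (B : Matrix (Fin m) (Fin n) ℝ) (hB : Bᵀ * B = 1)
    (y : Fin n → ℝ) : (B *ᵥ y) ⬝ᵥ (B *ᵥ y) = y ⬝ᵥ y := by
  rw [dot_self_mulVec, hB, one_mulVec]

-- Pythagoras
private lemma pythagoras {d k : ℕ} (Ustar : Matrix (Fin d) (Fin k) ℝ)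
    (hUstar : Ustarᵀ * Ustar = 1) (y : Fin d → ℝ) :
    y ⬝ᵥ y = (Ustarᵀ *ᵥ y) ⬝ᵥ (Ustarᵀ *ᵥ y)
      + ((1 - Ustar * Ustarᵀ) *ᵥ y) ⬝ᵥ ((1 - Ustar * Ustarᵀ) *ᵥ y) := by
  have h1 : (Ustarᵀ *ᵥ y) ⬝ᵥ (Ustarᵀ *ᵥ y) = y ⬝ᵥ ((Ustar * Ustarᵀ) *ᵥ y) := by
    rw [dot_self_mulVec, transpose_transpose]
  have h2 : ((1 - Ustar * Ustarᵀ) *ᵥ y) ⬝ᵥ ((1 - Ustar * Ustarᵀ) *ᵥ y)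
      = y ⬝ᵥ ((1 - Ustar * Ustarᵀ) *ᵥ y) := by
    have h3 : Ustar * Ustarᵀ * (Ustar * Ustarᵀ) = Ustar * Ustarᵀ := by
      rw [Matrix.mul_assoc Ustar, ← Matrix.mul_assoc Ustarᵀ, hUstar, Matrix.one_mul]
    have hsym : (1 - Ustar * Ustarᵀ)ᵀ * (1 - Ustar * Ustarᵀ) = 1 - Ustar * Ustarᵀ := by
      rw [transpose_sub, transpose_one, transpose_mul, transpose_transpose,
          Matrix.sub_mul, Matrix.mul_sub, Matrix.mul_sub, Matrix.one_mul, Matrix.one_mul, Matrix.mul_one,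
          h3, sub_self, sub_zero]
    rw [dot_self_mulVec, hsym]
  rw [h1, h2, sub_mulVec, one_mulVec, dotProduct_sub]
  ring



private lemma mulVec_sqrt_le {m n : ℕ} (A : Matrix (Fin m) (Fin n) ℝ) (z : Fin n → ℝ) :
    Real.sqrt ((A *ᵥ z) ⬝ᵥ (A *ᵥ z)) ≤ ‖A‖ * Real.sqrt (z ⬝ᵥ z) := by
  have h := A.l2_opNorm_mulVec ((WithLp.equiv 2 (Fin n → ℝ)).symm z)
  rw [← euc_norm_eq, ← euc_norm_eq]
  exact h

private lemma sqrt_sub_le {m : ℕ} (a b : Fin m → ℝ) :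
    Real.sqrt (a ⬝ᵥ a) - Real.sqrt (b ⬝ᵥ b) ≤ Real.sqrt ((a - b) ⬝ᵥ (a - b)) := by
  have h := norm_sub_norm_le ((WithLp.equiv 2 (Fin m → ℝ)).symm a)
    ((WithLp.equiv 2 (Fin m → ℝ)).symm b)
  have e : (WithLp.equiv 2 (Fin m → ℝ)).symm a - (WithLp.equiv 2 (Fin m → ℝ)).symm b =
      (WithLp.equiv 2 (Fin m → ℝ)).symm (a - b) := rfl
  rw [e, euc_norm_eq, euc_norm_eq, euc_norm_eq] at h
  linarith

private lemma opNorm_le_of_bound {n : ℕ} (A : Matrix (Fin n) (Fin n) ℝ) (M : ℝ) (hM : 0 ≤ M)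
    (h : ∀ z : Fin n → ℝ, Real.sqrt ((A *ᵥ z) ⬝ᵥ (A *ᵥ z)) ≤ M * Real.sqrt (z ⬝ᵥ z)) :
    ‖A‖ ≤ M := by
  rw [Matrix.l2_opNorm_def]
  refine ContinuousLinearMap.opNorm_le_bound _ hM fun x => ?_
  have hx := h ((WithLp.equiv 2 (Fin n → ℝ)) x)
  rw [← euc_norm_eq, ← euc_norm_eq, Equiv.symm_apply_apply] at hx
  exact hx

private lemma dot_pos {n : ℕ} {v : Fin n → ℝ} (hv : v ≠ 0) : 0 < v ⬝ᵥ v := by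
  have h : (WithLp.equiv 2 (Fin n → ℝ)).symm v ≠ 0 := by
    simpa using hv
  have := norm_pos_iff.mpr h
  rw [euc_norm_eq] at this
  nlinarith [Real.sq_sqrt (dot_self_nonneg v), Real.sqrt_nonneg (v ⬝ᵥ v)]


set_option maxHeartbeats 1000000 in
/-- Lower bound on the smallest singular value of the triangular factor `R`
in the QR step of alternating minimization, where `dist(U*, U) = ‖(I − U*U*ᵀ)U‖₂`; the
smallest-singular-value bound is expressed by `σ_min(R)·‖z‖ ≤ ‖Rz‖` for all `z`. -/
theorem R_smallest_singular_value_bound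
    (d₁ d₂ k : ℕ) (hk : 0 < k)
    (Wstar : Matrix (Fin d₁) (Fin d₂) ℝ)
    (Ustar : Matrix (Fin d₁) (Fin k) ℝ) (Vstar : Matrix (Fin d₂) (Fin k) ℝ)
    (σ : Fin k → ℝ)
    (hUstar : Ustarᵀ * Ustar = 1) (hVstar : Vstarᵀ * Vstar = 1)
    (hσdec : Antitone σ) (hσpos : ∀ p, 0 < σ p)
    (hWstar : Wstar = Ustar * Matrix.diagonal σ * Vstarᵀ)
    (U : Matrix (Fin d₁) (Fin k) ℝ) (hU : Uᵀ * U = 1)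
    (F : Matrix (Fin d₂) (Fin k) ℝ)
    (Vhat : Matrix (Fin d₂) (Fin k) ℝ) (hVhat : Vhat = Wstarᵀ * U - F)
    (V : Matrix (Fin d₂) (Fin k) ℝ) (R : Matrix (Fin k) (Fin k) ℝ)
    (hV : Vᵀ * V = 1) (hQR : Vhat = V * R) :
    (∀ z : Fin k → ℝ,
      (σ ⟨k - 1, by omega⟩ * Real.sqrt (1 - ‖(1 - Ustar * Ustarᵀ) * U‖ ^ 2) - ‖F‖) *
          Real.sqrt (z ⬝ᵥ z)
        ≤ Real.sqrt (R.mulVec z ⬝ᵥ R.mulVec z)) ∧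
    (‖F‖ < σ ⟨k - 1, by omega⟩ * Real.sqrt (1 - ‖(1 - Ustar * Ustarᵀ) * U‖ ^ 2) →
      IsUnit R.det ∧
      ‖R⁻¹‖ ≤ 1 /
        (σ ⟨k - 1, by omega⟩ * Real.sqrt (1 - ‖(1 - Ustar * Ustarᵀ) * U‖ ^ 2) - ‖F‖)) := by
  set s : ℝ := σ ⟨k - 1, by omega⟩ with hs
  set D : ℝ := ‖(1 - Ustar * Ustarᵀ) * U‖ with hD
  have hs_pos : 0 < s := hσpos _
  have hD_nonneg : (0:ℝ) ≤ D := norm_nonneg _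
  -- transpose of Wstar
  have hWT : Wstarᵀ = Vstar * Matrix.diagonal σ * Ustarᵀ := by
    rw [hWstar, Matrix.transpose_mul, Matrix.transpose_mul, Matrix.transpose_transpose,
      Matrix.diagonal_transpose, Matrix.mul_assoc]
  have first : ∀ z : Fin k → ℝ,
      (s * Real.sqrt (1 - D ^ 2) - ‖F‖) * Real.sqrt (z ⬝ᵥ z)
        ≤ Real.sqrt (R.mulVec z ⬝ᵥ R.mulVec z) := by
    intro z
    have hRz : R.mulVec z ⬝ᵥ R.mulVec z = (Vhat *ᵥ z) ⬝ᵥ (Vhat *ᵥ z) := by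
      rw [hQR, ← mulVec_mulVec, dot_ortho V hV]
    rw [hRz]
    rcases lt_or_ge (1 - D ^ 2) 0 with h1 | h1
    · have hsq : Real.sqrt (1 - D ^ 2) = 0 := Real.sqrt_eq_zero_of_nonpos h1.le
      rw [hsq, mul_zero, zero_sub]
      have : -‖F‖ * Real.sqrt (z ⬝ᵥ z) ≤ 0 :=
        mul_nonpos_of_nonpos_of_nonneg (neg_nonpos.mpr (norm_nonneg _)) (Real.sqrt_nonneg _)
      exact this.trans (Real.sqrt_nonneg _)
    · set y : Fin d₁ → ℝ := U *ᵥ z with hy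
      set w : Fin k → ℝ := Ustarᵀ *ᵥ y with hw
      set q : Fin d₁ → ℝ := (1 - Ustar * Ustarᵀ) *ᵥ y with hq
      have hyz : y ⬝ᵥ y = z ⬝ᵥ z := dot_ortho U hU z
      have hpyth : y ⬝ᵥ y = w ⬝ᵥ w + q ⬝ᵥ q := pythagoras Ustar hUstar y
      have hqz : Real.sqrt (q ⬝ᵥ q) ≤ D * Real.sqrt (z ⬝ᵥ z) := by
        have : q = ((1 - Ustar * Ustarᵀ) * U) *ᵥ z := by rw [hq, hy, mulVec_mulVec]
        rw [this]
        exact mulVec_sqrt_le _ z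
      have hqq : q ⬝ᵥ q ≤ D ^ 2 * (z ⬝ᵥ z) := by
        have h2 : Real.sqrt (q ⬝ᵥ q) ^ 2 ≤ (D * Real.sqrt (z ⬝ᵥ z)) ^ 2 :=
          pow_le_pow_left₀ (Real.sqrt_nonneg _) hqz 2
        rw [Real.sq_sqrt (dot_self_nonneg q), mul_pow, Real.sq_sqrt (dot_self_nonneg z)] at h2
        exact h2
      have hww : (1 - D ^ 2) * (z ⬝ᵥ z) ≤ w ⬝ᵥ w := by nlinarith
      have hwsqrt : Real.sqrt (1 - D ^ 2) * Real.sqrt (z ⬝ᵥ z) ≤ Real.sqrt (w ⬝ᵥ w) := by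
        rw [← Real.sqrt_mul h1]
        exact Real.sqrt_le_sqrt hww
      set g : Fin k → ℝ := Matrix.diagonal σ *ᵥ w with hg
      have hgg : s ^ 2 * (w ⬝ᵥ w) ≤ g ⬝ᵥ g := by
        simp only [dotProduct]
        rw [Finset.mul_sum]
        refine Finset.sum_le_sum fun i _ => ?_
        have hgi : g i = σ i * w i := by rw [hg, mulVec_diagonal]
        have hsle : s ≤ σ i := hσdec (by exact Fin.mk_le_mk.mpr (by omega))
        rw [hgi]
        have hss : s * s ≤ σ i * σ i :=
          mul_le_mul hsle hsle hs_pos.le (hs_pos.le.trans hsle)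
        nlinarith [mul_self_nonneg (w i), hss]
      have hgsqrt : s * Real.sqrt (w ⬝ᵥ w) ≤ Real.sqrt (g ⬝ᵥ g) := by
        have := Real.sqrt_le_sqrt hgg
        rwa [Real.sqrt_mul (sq_nonneg s), Real.sqrt_sq hs_pos.le] at this
      -- Vhat z = a - b
      set a : Fin d₂ → ℝ := Wstarᵀ *ᵥ y with ha
      set b : Fin d₂ → ℝ := F *ᵥ z with hb
      have hVz : Vhat *ᵥ z = a - b := by
        rw [hVhat, sub_mulVec, ha, hy, mulVec_mulVec, hb]
      have haa : a ⬝ᵥ a = g ⬝ᵥ g := by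
        rw [ha, hWT, ← mulVec_mulVec, ← mulVec_mulVec, dot_ortho Vstar hVstar, hg, hw]
      have htri : Real.sqrt (a ⬝ᵥ a) - Real.sqrt (b ⬝ᵥ b) ≤
          Real.sqrt ((Vhat *ᵥ z) ⬝ᵥ (Vhat *ᵥ z)) := by
        rw [hVz]; exact sqrt_sub_le a b
      have hFb : Real.sqrt (b ⬝ᵥ b) ≤ ‖F‖ * Real.sqrt (z ⬝ᵥ z) := mulVec_sqrt_le F z
      rw [haa] at htri
      have expand : (s * Real.sqrt (1 - D ^ 2) - ‖F‖) * Real.sqrt (z ⬝ᵥ z)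
          = s * (Real.sqrt (1 - D ^ 2) * Real.sqrt (z ⬝ᵥ z)) - ‖F‖ * Real.sqrt (z ⬝ᵥ z) := by
        ring
      have t1 : s * (Real.sqrt (1 - D ^ 2) * Real.sqrt (z ⬝ᵥ z)) ≤ s * Real.sqrt (w ⬝ᵥ w) :=
        mul_le_mul_of_nonneg_left hwsqrt hs_pos.le
      linarith
  refine ⟨first, fun hc => ?_⟩
  have hcpos : 0 < s * Real.sqrt (1 - D ^ 2) - ‖F‖ := by linarith
  have hdet : R.det ≠ 0 := by
    intro hdet0
    obtain ⟨v, hv0, hRv⟩ := (Matrix.exists_mulVec_eq_zero_iff (M := R)).mpr hdet0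
    have h0 := first v
    rw [hRv] at h0
    simp only [dotProduct_zero, zero_dotProduct, Real.sqrt_zero] at h0
    have hvpos : 0 < v ⬝ᵥ v := dot_pos hv0
    have : 0 < Real.sqrt (v ⬝ᵥ v) := Real.sqrt_pos.mpr hvpos
    nlinarith
  refine ⟨isUnit_iff_ne_zero.mpr hdet, ?_⟩
  refine opNorm_le_of_bound R⁻¹ (1 / (s * Real.sqrt (1 - D ^ 2) - ‖F‖)) (by positivity) fun z => ?_
  have h0 := first (R⁻¹ *ᵥ z)
  have hRR : R *ᵥ (R⁻¹ *ᵥ z) = z := by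
    rw [mulVec_mulVec, Matrix.mul_nonsing_inv R (isUnit_iff_ne_zero.mpr hdet), one_mulVec]
  rw [hRR] at h0
  rw [one_div, ← div_eq_inv_mul, le_div_iff₀ hcpos]
  linarith [mul_comm (Real.sqrt ((R⁻¹ *ᵥ z) ⬝ᵥ (R⁻¹ *ᵥ z))) (s * Real.sqrt (1 - D ^ 2) - ‖F‖)]
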